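/- arXiv:1607.05314 — 5 statements merged into one kernel-verified Lean document; each statement's English description precedes it below -/
import Mathlib

section
/- Let n ≥ 1 and k ≥ 0 be integers and let c₀, …, c_k be rational numbers such that for every integer j one has j^{2k} = ∑_{b=0}^{k} c_b · ∏_{r=0}^{b−1} ((n−r)² − j²). Then, as an identity of rational numbers, ∑_{j=1}^{n} j^{2k+1} · C(2n, n+j)² = ∑_{b=0}^{k} c_b · (n−b)_{b+1} · (n−b+1)_{b} · (n/(2(2n−b))) · C(2n, n)², where any term whose denominator 2(2n−b) vanishes is interpreted as 0 (its numerator factor (n−b)_{b+1} vanishes too in that case). -/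
open Finset


lemma asc_eval_prod (x : ℚ) (b : ℕ) :
    (ascPochhammer ℚ b).eval x = ∏ i ∈ range b, (x + i) := by
  induction b with
  | zero => simp
  | succ b ih =>
      rw [ascPochhammer_succ_right, prod_range_succ, ← ih]
      simp [Polynomial.eval_mul]

-- central binomial halving
lemma central_halve (p : ℕ) : (2*p+2).choose (p+1) = 2 * ((2*p+1).choose (p+1)) := by
  have hs : (2*p+1).choose p = (2*p+1).choose (p+1) := by
    have h := Nat.choose_symm (show p+1 ≤ 2*p+1 by omega)
    rwa [show 2*p+1-(p+1) = p by omega] at h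
  rw [show (2*p+2) = (2*p+1)+1 from rfl, Nat.choose_succ_succ, hs]
  ring

-- key step for product conversion
lemma keyA (M i : ℕ) :
    (((M:ℚ)+1)^2 - ((i:ℚ)+1)^2) * ((2*M+2).choose (M+i+2) : ℚ)
      = (2*(M:ℚ)+2)*(2*(M:ℚ)+1) * ((2*M).choose (M+i+1) : ℚ) := by
  have h1 := Nat.add_one_mul_choose_eq (2*M+1) (M+i+1)
  have h2 := Nat.add_one_mul_choose_eq (2*M) (M+i)
  have h3 := Nat.choose_succ_succ (2*M) (M+i)
  have q1 : (2*(M:ℚ)+2) * ((2*M+1).choose (M+i+1) : ℚ)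
      = ((2*M+2).choose (M+i+2) : ℚ) * ((M:ℚ)+(i:ℚ)+2) := by
    exact_mod_cast congrArg (Nat.cast (R := ℚ)) h1
  have q2 : (2*(M:ℚ)+1) * ((2*M).choose (M+i) : ℚ)
      = ((2*M+1).choose (M+i+1) : ℚ) * ((M:ℚ)+(i:ℚ)+1) := by
    exact_mod_cast congrArg (Nat.cast (R := ℚ)) h2
  have q3 : ((2*M+1).choose (M+i+1) : ℚ)
      = ((2*M).choose (M+i) : ℚ) + ((2*M).choose (M+i+1) : ℚ) := by
    exact_mod_cast congrArg (Nat.cast (R := ℚ)) h3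
  linear_combination ((i:ℚ)-M) * q1 + (2*(M:ℚ)+2)*q2 + (2*(M:ℚ)+2)*(2*(M:ℚ)+1)*q3

-- telescoping pointwise identity
lemma keyB (p q i : ℕ) :
    ((i:ℚ)+1) * ((2*p+2).choose (p+i+2) : ℚ) * ((2*q+2).choose (q+i+2) : ℚ)
        * (2*((p:ℚ)+(q:ℚ)+2))
    = 4*((p:ℚ)+1)*((q:ℚ)+1) *
        (((2*p+1).choose (p+i+1) : ℚ) * ((2*q+1).choose (q+i+1) : ℚ)
          - ((2*p+1).choose (p+i+2) : ℚ) * ((2*q+1).choose (q+i+2) : ℚ)) := by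
  have qa1 : (2*(p:ℚ)+2) * ((2*p+1).choose (p+i+1) : ℚ)
      = ((2*p+2).choose (p+i+2) : ℚ) * ((p:ℚ)+(i:ℚ)+2) := by
    exact_mod_cast congrArg (Nat.cast (R := ℚ)) (Nat.add_one_mul_choose_eq (2*p+1) (p+i+1))
  have qa2 : ((2*p+2).choose (p+i+2) : ℚ)
      = ((2*p+1).choose (p+i+1) : ℚ) + ((2*p+1).choose (p+i+2) : ℚ) := by
    exact_mod_cast congrArg (Nat.cast (R := ℚ)) (Nat.choose_succ_succ (2*p+1) (p+i+1))
  have qb1 : (2*(q:ℚ)+2) * ((2*q+1).choose (q+i+1) : ℚ)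
      = ((2*q+2).choose (q+i+2) : ℚ) * ((q:ℚ)+(i:ℚ)+2) := by
    exact_mod_cast congrArg (Nat.cast (R := ℚ)) (Nat.add_one_mul_choose_eq (2*q+1) (q+i+1))
  have qb2 : ((2*q+2).choose (q+i+2) : ℚ)
      = ((2*q+1).choose (q+i+1) : ℚ) + ((2*q+1).choose (q+i+2) : ℚ) := by
    exact_mod_cast congrArg (Nat.cast (R := ℚ)) (Nat.choose_succ_succ (2*q+1) (q+i+1))
  linear_combination (-2*((q:ℚ)+1)*((2*q+2).choose (q+i+2) : ℚ)) * qa1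
    + (-4*((p:ℚ)+1)*((q:ℚ)+1)*((2*q+1).choose (q+i+2) : ℚ)) * qa2
    + (-2*((p:ℚ)+1)*((2*p+2).choose (p+i+2) : ℚ)) * qb1
    + (-4*((p:ℚ)+1)*((q:ℚ)+1)*(((2*p+2).choose (p+i+2) : ℚ) - ((2*p+1).choose (p+i+1) : ℚ))) * qb2

lemma prod_conv (n j : ℕ) (hj : 1 ≤ j) :
    ∀ b, b ≤ n →
    (∏ r ∈ range b, (((n:ℚ)-(r:ℚ))^2 - (j:ℚ)^2)) * ((2*n).choose (n+j) : ℚ)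
    = (∏ r ∈ range (2*b), (2*(n:ℚ) - (r:ℚ))) * ((2*(n-b)).choose ((n-b)+j) : ℚ) := by
  intro b
  induction b with
  | zero => intro _; simp
  | succ b ih =>
    intro hb
    have hbn : b ≤ n := by omega
    obtain ⟨M, hM⟩ : ∃ M, n - b = M + 1 := ⟨n - b - 1, by omega⟩
    obtain ⟨i, hi⟩ : ∃ i, j = i + 1 := ⟨j - 1, by omega⟩
    subst hi
    have hnQ : (n:ℚ) = (M:ℚ)+1+(b:ℚ) := by
      have : n = M + 1 + b := by omega
      exact_mod_cast congrArg (Nat.cast (R := ℚ)) this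
    rw [prod_range_succ, show 2*(b+1) = 2*b+1+1 by ring, prod_range_succ, prod_range_succ,
      mul_right_comm, ih hbn, hM, show n - (b+1) = M by omega,
      show 2*(M+1) = 2*M+2 by ring, show (M+1)+(i+1) = M+i+2 by ring,
      show M+(i+1) = M+i+1 by ring]
    have key := keyA M i
    push_cast [hnQ]
    push_cast at key
    linear_combination (∏ r ∈ range (2*b), (2*((M:ℚ)+1+(b:ℚ)) - (r:ℚ))) * key

lemma central_rec (N : ℕ) :
    ((N:ℚ)+1)^2 * ((2*N+2).choose (N+1) : ℚ)
      = (2*(N:ℚ)+2)*(2*(N:ℚ)+1) * ((2*N).choose N : ℚ) := by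
  have h1 : (2*(N:ℚ)+2) * ((2*N+1).choose N : ℚ)
      = ((2*N+2).choose (N+1) : ℚ) * ((N:ℚ)+1) := by
    exact_mod_cast congrArg (Nat.cast (R := ℚ)) (Nat.add_one_mul_choose_eq (2*N+1) N)
  have h2 : (2*(N:ℚ)+1) * ((2*N).choose N : ℚ)
      = ((2*N+1).choose (N+1) : ℚ) * ((N:ℚ)+1) := by
    exact_mod_cast congrArg (Nat.cast (R := ℚ)) (Nat.add_one_mul_choose_eq (2*N) N)
  have hs : ((2*N+1).choose (N+1) : ℚ) = ((2*N+1).choose N : ℚ) := by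
    have h := Nat.choose_symm (show N+1 ≤ 2*N+1 by omega)
    rw [show 2*N+1-(N+1) = N by omega] at h
    exact_mod_cast congrArg (Nat.cast (R := ℚ)) h.symm
  linear_combination (-((N:ℚ)+1))*h1 + (-(2*(N:ℚ)+2))*h2 + (-(2*(N:ℚ)+2)*((N:ℚ)+1))*hs

lemma claimC (m : ℕ) : ∀ b : ℕ,
    (∏ i ∈ range b, ((m:ℚ)+1+(i:ℚ)))^2 * ((2*(m+b)).choose (m+b) : ℚ)
      = (∏ r ∈ range (2*b), (2*((m:ℚ)+(b:ℚ)) - (r:ℚ))) * ((2*m).choose m : ℚ) := by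
  intro b
  induction b with
  | zero => simp
  | succ b ih =>
    have crec := central_rec (m+b)
    push_cast at crec
    have hE : (∏ r ∈ range (2*(b+1)), (2*((m:ℚ)+((b:ℚ)+1)) - (r:ℚ)))
        = (∏ r ∈ range (2*b), (2*((m:ℚ)+(b:ℚ)) - (r:ℚ)))
            * (2*((m:ℚ)+(b:ℚ))+2) * (2*((m:ℚ)+(b:ℚ))+1) := by
      rw [show 2*(b+1) = (2*b+1)+1 by ring, prod_range_succ', prod_range_succ']
      have : ∀ r ∈ range (2*b), (2*((m:ℚ)+((b:ℚ)+1)) - (((r+1+1:ℕ)):ℚ))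
          = (2*((m:ℚ)+(b:ℚ)) - (r:ℚ)) := by
        intro r _; push_cast; ring
      rw [prod_congr rfl this]
      push_cast; ring
    rw [show m+(b+1) = (m+b)+1 by ring, show 2*((m+b)+1) = 2*(m+b)+2 by ring,
      prod_range_succ]
    push_cast
    rw [hE]
    linear_combination (∏ i ∈ range b, ((m:ℚ)+1+(i:ℚ)))^2 * crec
      + (2*((m:ℚ)+(b:ℚ))+2)*(2*((m:ℚ)+(b:ℚ))+1) * ih

lemma core (n b : ℕ) (hn : 1 ≤ n) :
    ∑ j ∈ Icc 1 n,
        (∏ r ∈ range b, (((n:ℚ)-(r:ℚ))^2 - (j:ℚ)^2)) * (j:ℚ) * ((2*n).choose (n+j) : ℚ)^2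
    = (ascPochhammer ℚ (b+1)).eval ((n:ℚ)-(b:ℚ)) * (ascPochhammer ℚ b).eval ((n:ℚ)-(b:ℚ)+1)
        * ((n:ℚ)/(2*(2*(n:ℚ)-(b:ℚ)))) * ((2*n).choose n : ℚ)^2 := by
  rcases le_or_gt n b with hbn | hbn
  · -- b ≥ n : both sides vanish
    have hZ : ∀ j ∈ Icc 1 n,
        (∏ r ∈ range b, (((n:ℚ)-(r:ℚ))^2 - (j:ℚ)^2)) * (j:ℚ) * ((2*n).choose (n+j) : ℚ)^2 = 0 := by
      intro j hj
      rw [mem_Icc] at hj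
      have hmem : n - j ∈ range b := by rw [mem_range]; omega
      have hval : ((n:ℚ) - ((n-j : ℕ):ℚ))^2 - (j:ℚ)^2 = 0 := by
        rw [Nat.cast_sub hj.2]; ring
      rw [Finset.prod_eq_zero hmem hval, zero_mul, zero_mul]
    have h1 : (ascPochhammer ℚ (b+1)).eval ((n:ℚ)-(b:ℚ)) = 0 := by
      rw [asc_eval_prod]
      have hmem : b - n ∈ range (b+1) := by rw [mem_range]; omega
      refine Finset.prod_eq_zero hmem ?_
      rw [Nat.cast_sub hbn]; ring
    rw [Finset.sum_eq_zero hZ, h1]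
    ring
  · -- b < n
    obtain ⟨p, hp⟩ : ∃ p, n = p + 1 := ⟨n - 1, by omega⟩
    obtain ⟨q, hq⟩ : ∃ q, n - b = q + 1 := ⟨n - b - 1, by omega⟩
    have hnq : n = q + 1 + b := by omega
    set X : ℚ := 2*((n:ℚ)+((q:ℚ)+1)) with hX
    have hXne : X ≠ 0 := by rw [hX]; positivity
    apply mul_right_cancel₀ hXne
    set E : ℚ := ∏ r ∈ range (2*b), (2*(n:ℚ) - (r:ℚ)) with hE
    set Y : ℚ := ((2*p+1).choose (p+1) : ℚ) with hY
    set Z : ℚ := ((2*q+1).choose (q+1) : ℚ) with hZdef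
    have step1 : (∑ j ∈ Icc 1 n,
        (∏ r ∈ range b, (((n:ℚ)-(r:ℚ))^2 - (j:ℚ)^2)) * (j:ℚ) * ((2*n).choose (n+j) : ℚ)^2) * X
        = E * (4*(n:ℚ)*((q:ℚ)+1)) * (Y * Z) := by
      rw [Finset.sum_mul, ← Finset.Ico_add_one_right_eq_Icc, Finset.sum_Ico_eq_sum_range,
        show n+1-1 = n from rfl]
      have point : ∀ i : ℕ,
          (∏ r ∈ range b, (((n:ℚ)-(r:ℚ))^2 - ((1+i : ℕ):ℚ)^2)) * ((1+i : ℕ):ℚ)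
              * ((2*n).choose (n+(1+i)) : ℚ)^2 * X
          = E * (4*(n:ℚ)*((q:ℚ)+1)) *
              (((2*p+1).choose (p+i+1) : ℚ) * ((2*q+1).choose (q+i+1) : ℚ)
                - ((2*p+1).choose (p+(i+1)+1) : ℚ) * ((2*q+1).choose (q+(i+1)+1) : ℚ)) := by
        intro i
        have pc := prod_conv n (1+i) (by omega) b (le_of_lt hbn)
        rw [hq, show 2*(q+1) = 2*q+2 by ring, show (q+1)+(1+i) = q+i+2 by ring,
          show 2*n = 2*p+2 by omega, show n+(1+i) = p+i+2 by omega] at pc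
        have kb := keyB p q i
        rw [show p+(i+1)+1 = p+i+2 by ring, show q+(i+1)+1 = q+i+2 by ring,
          show 2*n = 2*p+2 by omega, show n+(1+i) = p+i+2 by omega]
        have hnQ : (n:ℚ) = (p:ℚ)+1 := by rw [hp]; push_cast; ring
        push_cast at pc ⊢
        rw [hX, hE] at *
        linear_combination ((1+(i:ℚ)) * ((2*p+2).choose (p+i+2) : ℚ) * (2*((n:ℚ)+((q:ℚ)+1)))) * pc
          + (∏ r ∈ range (2*b), (2*(n:ℚ) - (r:ℚ))) * kb
          + (((1+(i:ℚ)) * ((2*p+2).choose (p+i+2) : ℚ) *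
              (∏ r ∈ range (2*b), (2*(n:ℚ) - (r:ℚ))) * ((2*q+2).choose (q+i+2) : ℚ)) * 2
              - 4*((q:ℚ)+1)*(((2*p+1).choose (p+i+1) : ℚ) * ((2*q+1).choose (q+i+1) : ℚ)
                - ((2*p+1).choose (p+i+2) : ℚ) * ((2*q+1).choose (q+i+2) : ℚ))
                * (∏ r ∈ range (2*b), (2*(n:ℚ) - (r:ℚ)))) * hnQ
      rw [Finset.sum_congr rfl (fun i _ => point i), ← Finset.mul_sum,
        Finset.sum_range_sub' (fun t => ((2*p+1).choose (p+t+1) : ℚ) * ((2*q+1).choose (q+t+1) : ℚ))]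
      have hGn : ((2*p+1).choose (p+n+1) : ℚ) = 0 := by
        rw [Nat.choose_eq_zero_of_lt (by omega)]; norm_num
      rw [show p+0+1 = p+1 by ring, show q+0+1 = q+1 by ring, hGn]
      ring
    rw [step1]
    -- now the RHS side
    have hcast : (n:ℚ)-(b:ℚ) = (q:ℚ)+1 := by
      rw [hnq]; push_cast; ring
    set Pi : ℚ := ∏ i ∈ range b, ((q:ℚ)+2+(i:ℚ)) with hPi
    have hP1 : (ascPochhammer ℚ (b+1)).eval ((n:ℚ)-(b:ℚ)) = ((q:ℚ)+1) * Pi := by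
      rw [asc_eval_prod, hcast, prod_range_succ']
      rw [hPi, Finset.prod_congr rfl (fun t _ => by push_cast; ring :
        ∀ t ∈ range b, ((q:ℚ)+1+((t+1 : ℕ):ℚ)) = ((q:ℚ)+2+(t:ℚ)))]
      push_cast; ring
    have hP2 : (ascPochhammer ℚ b).eval ((n:ℚ)-(b:ℚ)+1) = Pi := by
      rw [asc_eval_prod, hcast, hPi]
      exact Finset.prod_congr rfl (fun t _ => by push_cast; ring)
    have hch1 : ((2*n).choose n : ℚ) = 2 * Y := by
      rw [hY, show 2*n = 2*p+2 by omega, hp]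
      exact_mod_cast congrArg (Nat.cast (R := ℚ)) (central_halve p)
    have hch2 : ((2*(q+1)).choose (q+1) : ℚ) = 2 * Z := by
      rw [hZdef, show 2*(q+1) = 2*q+2 by ring]
      exact_mod_cast congrArg (Nat.cast (R := ℚ)) (central_halve q)
    have hcl : Pi^2 * ((2*n).choose n : ℚ) = E * ((2*(q+1)).choose (q+1) : ℚ) := by
      have h := claimC (q+1) b
      rw [show q+1+b = n by omega] at h
      push_cast at h
      rw [hPi, hE]
      have e1 : ∀ i ∈ range b, ((q:ℚ)+1+1+(i:ℚ)) = ((q:ℚ)+2+(i:ℚ)) := fun i _ => by ring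
      have e2 : ∀ r ∈ range (2*b), (2*((q:ℚ)+1+(b:ℚ)) - (r:ℚ)) = (2*(n:ℚ) - (r:ℚ)) := by
        intro r _
        have : (n:ℚ) = (q:ℚ)+1+(b:ℚ) := by rw [hnq]; push_cast; ring
        rw [this]
      rw [Finset.prod_congr rfl e1, Finset.prod_congr rfl e2] at h
      exact h
    have hdiv : (n:ℚ)/X * X = (n:ℚ) := div_mul_cancel₀ _ hXne
    have h2nb : 2*(2*(n:ℚ)-(b:ℚ)) = X := by rw [hX]; linear_combination 2 * hcast
    rw [hP1, hP2, h2nb]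
    symm
    calc ((q:ℚ)+1) * Pi * Pi * ((n:ℚ)/X) * ((2*n).choose n : ℚ)^2 * X
        = ((q:ℚ)+1) * Pi * Pi * ((2*n).choose n : ℚ)^2 * ((n:ℚ)/X * X) := by ring
      _ = ((q:ℚ)+1) * Pi * Pi * ((2*n).choose n : ℚ)^2 * (n:ℚ) := by rw [hdiv]
      _ = E * (4*(n:ℚ)*((q:ℚ)+1)) * (Y * Z) := by
          linear_combination (((q:ℚ)+1)*(n:ℚ)*((2*n).choose n : ℚ)) * hcl
            + (((q:ℚ)+1)*(n:ℚ)*E*((2*(q+1)).choose (q+1) : ℚ)) * hch1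
            + (((q:ℚ)+1)*(n:ℚ)*E*2*Y) * hch2



/-- Lemma 5.3, Eq. (5.7) of Krattenthaler–Schneider. Division by zero in `ℚ`
yields zero, which is the intended interpretation of terms with `b = 2n`. -/
theorem single_sum_odd_power_squared (n k : ℕ) (hn : 1 ≤ n) (c : ℕ → ℚ)
    (hc : ∀ j : ℤ, (j : ℚ) ^ (2 * k)
      = ∑ b ∈ Finset.range (k + 1), c b *
          ∏ r ∈ Finset.range b, (((n : ℚ) - (r : ℚ)) ^ 2 - (j : ℚ) ^ 2)) :
    ∑ j ∈ Finset.Icc 1 n, (j : ℚ) ^ (2 * k + 1) * ((2 * n).choose (n + j) : ℚ) ^ 2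
    = ∑ b ∈ Finset.range (k + 1),
        c b * (ascPochhammer ℚ (b + 1)).eval ((n : ℚ) - (b : ℚ))
          * (ascPochhammer ℚ b).eval ((n : ℚ) - (b : ℚ) + 1)
          * ((n : ℚ) / (2 * (2 * (n : ℚ) - (b : ℚ))))
          * ((2 * n).choose n : ℚ) ^ 2 := by
  have hstep : ∀ j ∈ Icc 1 n, (j:ℚ)^(2*k+1) * ((2*n).choose (n+j):ℚ)^2
      = ∑ b ∈ range (k+1), c b *
          ((∏ r ∈ range b, (((n:ℚ)-(r:ℚ))^2 - (j:ℚ)^2)) * (j:ℚ) * ((2*n).choose (n+j):ℚ)^2) := by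
    intro j _
    have h := hc (j:ℤ)
    push_cast at h
    rw [pow_succ, h, Finset.sum_mul, Finset.sum_mul]
    exact Finset.sum_congr rfl (fun b _ => by ring)
  rw [Finset.sum_congr rfl hstep, Finset.sum_comm]
  refine Finset.sum_congr rfl (fun b _ => ?_)
  rw [← Finset.mul_sum, core n b hn]
  ring
end

section
/- Let m and n be integers with m ≥ 1 and n ≥ 1, and set α(i) = 1/2 if i = 0 and α(i) = 1 otherwise. Then, as an identity of rational numbers, ∑_{i=0}^{n} ∑_{j=0}^{m} α(i)·α(j)·|j² − i²| · C(2n, n+i) · C(2m, m+j) = (nm/2)·C(2n,n)·C(2m,m) + 2·(m − n) · ∑_{j=1}^{n+m} ∑_{i=0}^{j−1} α(i) · ( C(2n, n+i)·C(2m−2, m+j−1) − C(2n−2, n+j−1)·C(2m, m+i) ), where m − n is taken in ℚ (it may be negative), and the range j ≤ n+m covers all nonzero terms since the binomial coefficients vanish beyond it. -/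
/-!
Write `R_q(i) = C(2q, q+i)` and `H_q(i) = C(2q+1, q+1+i)` (`evenRow` and `oddRow`), so that
Pascal's rule reads `R_{q+1}(i+1) = H_q(i) + H_q(i+1)` and `H_q(i) = R_q(i) + R_q(i+1)`, and the
entries `C(2n-2, n+j-1)` on the right are `R_{n-1}(j)`. The diagonal terms of the double sum
vanish, and `(n² - i²) R_n(i) = 2n(2n-1) R_{n-1}(i)` trades the weight `j² - i²` of a pair `i < j`
for `m² - n²` plus terms with `R_{n-1}` and `R_{m-1}`. This leaves six triangular sums
`∑_{i<j} α(i) f(i) g(j)`. Pascal's rule and summation by parts bring each of them, and the two on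
the right-hand side, to a multiple of `∑_{i<j} H_{n-1}(i) H_{m-1}(j)` or of its mirror image plus
sums along the diagonal, and the triangular parts match exactly. With `a = n-1`, `b = m-1`, the
diagonal sums reduce by summation by parts to terms at `i = 0`, except for
`∑_i (H_a(i) H_b(i+1) - H_b(i) H_a(i+1))`, which telescopes because
`(a+i+2) H_a(i+1) = (a-i) H_a(i)` gives
`(n+m)(H_a(i) H_b(i+1) - H_b(i) H_a(i+1)) = (m-n)(H_a(i) H_b(i) - H_a(i+1) H_b(i+1))`.
-/

/-- The weight `α(i)`, equal to `1/2` if `i = 0` and to `1` otherwise. -/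
def alphaWeight (i : ℕ) : ℚ := if i = 0 then 1 / 2 else 1

namespace Finset

theorem sum_range_succ_of_eq_zero {M : Type*} [AddCommGroup M] {f : ℕ → M} {N : ℕ} (hN : f N = 0) :
    ∑ i ∈ range N, f (i + 1) = ∑ i ∈ range N, f i - f 0 := by
  have h := (sum_range_succ' f N).symm.trans (sum_range_succ f N)
  rw [hN, add_zero] at h
  exact eq_sub_of_add_eq h

theorem sum_range_sum_range_of_diag_eq_zero {M : Type*} [AddCommMonoid M] (F : ℕ → ℕ → M)
    (hF : ∀ i, F i i = 0) (N : ℕ) :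
    ∑ i ∈ range (N + 1), ∑ j ∈ range (N + 1), F i j
      = ∑ t ∈ range N, ∑ i ∈ range (t + 1), (F i (t + 1) + F (t + 1) i) := by
  induction N with
  | zero => simp [hF]
  | succ N ih =>
    rw [sum_range_succ _ (N + 1), sum_range_succ (fun t => ∑ i ∈ range (t + 1), _), ← ih]
    simp only [sum_range_succ (fun j => F _ j) (N + 1), sum_add_distrib, hF, add_zero]
    abel

theorem sum_Icc_one_eq_sum_range {M : Type*} [AddCommMonoid M] (f : ℕ → M) (N : ℕ) :
    ∑ j ∈ Icc 1 N, f j = ∑ t ∈ range N, f (t + 1) := by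
  induction N with
  | zero => simp
  | succ N ih => rw [sum_Icc_succ_top (by omega), ih, sum_range_succ]

end Finset

open Finset

theorem two_mul_sum_alphaWeight_mul (f : ℕ → ℚ) (t : ℕ) :
    2 * ∑ i ∈ range (t + 1), alphaWeight i * f i
      = ∑ i ∈ range (t + 1), (f i + f (i + 1)) - f (t + 1) := by
  induction t with
  | zero => simp [alphaWeight]
  | succ t ih =>
    rw [sum_range_succ _ (t + 1), mul_add, ih, sum_range_succ _ (t + 1), alphaWeight,
      if_neg t.succ_ne_zero]
    ring

namespace CentralBinomialRow

def evenRow (q i : ℕ) : ℚ := (2 * q).choose (q + i)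

def oddRow (q i : ℕ) : ℚ := (2 * q + 1).choose (q + 1 + i)

theorem evenRow_eq_zero {q i : ℕ} (h : q < i) : evenRow q i = 0 := by
  rw [evenRow, Nat.choose_eq_zero_of_lt (by omega), Nat.cast_zero]

theorem oddRow_eq_zero {q i : ℕ} (h : q < i) : oddRow q i = 0 := by
  rw [oddRow, Nat.choose_eq_zero_of_lt (by omega), Nat.cast_zero]

theorem oddRow_eq_evenRow_add (q i : ℕ) : oddRow q i = evenRow q i + evenRow q (i + 1) := by
  rw [oddRow, evenRow, evenRow, show q + 1 + i = q + i + 1 by ring, Nat.choose_succ_succ',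
    Nat.cast_add, ← add_assoc]

theorem evenRow_succ_succ (q i : ℕ) : evenRow (q + 1) (i + 1) = oddRow q i + oddRow q (i + 1) := by
  rw [evenRow, oddRow, oddRow, show 2 * (q + 1) = 2 * q + 1 + 1 by ring,
    show q + 1 + (i + 1) = q + 1 + i + 1 by ring, Nat.choose_succ_succ', Nat.cast_add]

theorem evenRow_succ_zero (q : ℕ) : evenRow (q + 1) 0 = 2 * oddRow q 0 := by
  have hsymm : (2 * q + 1).choose q = (2 * q + 1).choose (q + 1) := by
    rw [← Nat.choose_symm (by omega : q ≤ 2 * q + 1)]; congr 1; omega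
  rw [evenRow, oddRow, show 2 * (q + 1) = 2 * q + 1 + 1 by ring, Nat.choose_succ_succ', hsymm]
  push_cast; ring

theorem sq_sub_sq_mul_evenRow_succ (q i : ℕ) :
    (((q : ℚ) + 1) ^ 2 - (i : ℚ) ^ 2) * evenRow (q + 1) i
      = 2 * ((q : ℚ) + 1) * (2 * q + 1) * evenRow q i := by
  rcases lt_or_ge (q + 1) i with h | h
  · rw [evenRow_eq_zero h, evenRow_eq_zero (by omega)]; ring
  have h₁ := Nat.add_one_mul_choose_eq (2 * q + 1) (q + i)
  have h₂ := Nat.choose_mul_succ_eq (2 * q) (q + i)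
  rw [show 2 * q + 1 - (q + i) = q + 1 - i by omega] at h₂
  have h₁' : ((2 * q + 1 + 1 : ℕ) : ℚ) * (2 * q + 1).choose (q + i)
      = (2 * q + 1 + 1).choose (q + i + 1) * ((q + i : ℕ) + 1) := by exact_mod_cast h₁
  have h₂' : ((2 * q).choose (q + i) : ℚ) * ((2 * q : ℕ) + 1)
      = (2 * q + 1).choose (q + i) * ((q + 1 - i : ℕ) : ℚ) := by exact_mod_cast h₂
  rw [evenRow, evenRow, show 2 * (q + 1) = 2 * q + 1 + 1 by ring,
    show q + 1 + i = q + i + 1 by ring]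
  push_cast [Nat.cast_sub h] at h₁' h₂' ⊢
  linear_combination (i - (q : ℚ) - 1) * h₁' - 2 * ((q : ℚ) + 1) * h₂'

theorem oddRow_succ_mul (q i : ℕ) :
    ((q : ℚ) + i + 2) * oddRow q (i + 1) = ((q : ℚ) - i) * oddRow q i := by
  rcases lt_or_ge q i with h | h
  · rw [oddRow_eq_zero h, oddRow_eq_zero (by omega)]; ring
  have hchoose := Nat.choose_succ_right_eq (2 * q + 1) (q + 1 + i)
  rw [show 2 * q + 1 - (q + 1 + i) = q - i by omega] at hchoose
  have hQ : ((2 * q + 1).choose (q + 1 + i + 1) : ℚ) * ((q + 1 + i : ℕ) + 1)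
      = ((2 * q + 1).choose (q + 1 + i) : ℚ) * ((q - i : ℕ) : ℚ) := by exact_mod_cast hchoose
  rw [oddRow, oddRow, show q + 1 + (i + 1) = q + 1 + i + 1 by ring]
  push_cast [Nat.cast_sub h] at hQ ⊢
  linear_combination hQ

theorem sum_alphaWeight_mul_evenRow_succ (a t : ℕ) :
    ∑ i ∈ range (t + 1), alphaWeight i * evenRow (a + 1) i
      = 2 * ∑ i ∈ range (t + 1), oddRow a i - oddRow a t := by
  induction t with
  | zero => simp [alphaWeight, evenRow_succ_zero]; ring
  | succ t ih =>
    rw [sum_range_succ _ (t + 1), ih, sum_range_succ _ (t + 1), alphaWeight, if_neg t.succ_ne_zero,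
      evenRow_succ_succ]
    ring

theorem sum_oddRow_mul_oddRow (a b : ℕ) {N : ℕ} (hN : a < N) :
    ∑ i ∈ range N, oddRow a i * oddRow b i
      = ∑ i ∈ range N, evenRow a i * evenRow (b + 1) i - evenRow a 0 * evenRow (b + 1) 0 / 2 := by
  have shift₁ := sum_range_succ_of_eq_zero (N := N) (f := fun i => evenRow a i * evenRow (b + 1) i)
    (by simp only [evenRow_eq_zero hN, zero_mul])
  have shift₂ := sum_range_succ_of_eq_zero (N := N) (f := fun i => evenRow a i * oddRow b i)
    (by simp only [evenRow_eq_zero hN, zero_mul])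
  simp only [evenRow_succ_succ, evenRow_succ_zero, mul_add, sum_add_distrib] at shift₁
  simp only [oddRow_eq_evenRow_add a, add_mul, sum_add_distrib, evenRow_succ_zero]
  linear_combination shift₁ - shift₂

theorem oddRow_wronskian (a b i : ℕ) :
    ((a : ℚ) + b + 2) * (oddRow a i * oddRow b (i + 1) - oddRow b i * oddRow a (i + 1))
      = ((b : ℚ) - a) * (oddRow a i * oddRow b i - oddRow a (i + 1) * oddRow b (i + 1)) := by
  have ha := oddRow_succ_mul a i
  have hb := oddRow_succ_mul b i
  have hpos : ((a : ℚ) + i + 2) * ((b : ℚ) + i + 2) ≠ 0 := by positivity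
  refine mul_left_cancel₀ hpos ?_
  linear_combination (((a : ℚ) + b + 2) * ((a : ℚ) + i + 2) * oddRow a i
      + ((b : ℚ) - a) * ((a : ℚ) + i + 2) * oddRow a (i + 1)) * hb
    + (-((a : ℚ) + b + 2) * ((b : ℚ) + i + 2) * oddRow b i
      + ((b : ℚ) - a) * ((b : ℚ) - i) * oddRow b i) * ha

theorem sum_oddRow_wronskian (a b : ℕ) {N : ℕ} (hN : a < N) :
    ((a : ℚ) + b + 2) * (∑ i ∈ range N, oddRow a i * oddRow b (i + 1)
        - ∑ i ∈ range N, oddRow b i * oddRow a (i + 1))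
      = ((b : ℚ) - a) * (oddRow a 0 * oddRow b 0) := by
  rw [← sum_sub_distrib, mul_sum]
  simp only [oddRow_wronskian, ← mul_sum]
  rw [sum_range_sub' (fun i => oddRow a i * oddRow b i), oddRow_eq_zero hN, zero_mul, sub_zero]

/-- `∑_{0 ≤ i < j ≤ N} α(i) f(i) g(j)`, summed over `t = j - 1`. -/
def triangleSum (f g : ℕ → ℚ) (N : ℕ) : ℚ :=
  ∑ t ∈ range N, (∑ i ∈ range (t + 1), alphaWeight i * f i) * g (t + 1)

def oddTriangleSum (a b N : ℕ) : ℚ :=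
  ∑ t ∈ range N, (∑ i ∈ range (t + 1), oddRow a i) * oddRow b (t + 1)

theorem triangleSum_eq_sum_Icc (f g : ℕ → ℚ) (N : ℕ) :
    triangleSum f g N = ∑ j ∈ Icc 1 N, ∑ i ∈ range j, alphaWeight i * (f i * g j) := by
  simp only [triangleSum, sum_Icc_one_eq_sum_range, sum_mul, mul_assoc]

theorem sum_partialSum_oddRow_mul_oddRow (a b : ℕ) {N : ℕ} (hN : b < N) :
    ∑ t ∈ range N, (∑ i ∈ range (t + 1), oddRow a i) * oddRow b t
      = oddTriangleSum a b N + ∑ t ∈ range N, oddRow a t * oddRow b t := by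
  have shift := sum_range_succ_of_eq_zero (N := N)
    (f := fun s => (∑ i ∈ range s, oddRow a i) * oddRow b s)
    (by simp only [oddRow_eq_zero hN, mul_zero])
  simp only [sum_range_zero, zero_mul, sub_zero] at shift
  rw [oddTriangleSum, shift, ← sum_add_distrib]
  refine sum_congr rfl fun t _ => ?_
  rw [sum_range_succ]
  ring

theorem triangleSum_evenRow_succ_evenRow_succ (a b : ℕ) {N : ℕ} (hN : b < N) :
    triangleSum (evenRow (a + 1)) (evenRow (b + 1)) N
      = 4 * oddTriangleSum a b N + ∑ t ∈ range N, oddRow a t * oddRow b t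
        - ∑ t ∈ range N, oddRow a t * oddRow b (t + 1) := by
  have h := sum_partialSum_oddRow_mul_oddRow a b hN
  rw [oddTriangleSum] at h ⊢
  simp only [triangleSum, sum_alphaWeight_mul_evenRow_succ, evenRow_succ_succ, sub_mul, mul_add,
    sum_add_distrib, sum_sub_distrib, mul_assoc, ← mul_sum]
  linear_combination 2 * h

theorem triangleSum_evenRow_succ_evenRow (a b : ℕ) {N : ℕ} (hN : b ≤ N) :
    triangleSum (evenRow (a + 1)) (evenRow b) N = oddTriangleSum a b N := by
  have shift := sum_range_succ_of_eq_zero (N := N)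
    (f := fun s => (∑ i ∈ range s, oddRow a i) * evenRow b (s + 1))
    (by simp only [evenRow_eq_zero (Nat.lt_succ_of_le hN), mul_zero])
  simp only [sum_range_zero, zero_mul, sub_zero] at shift
  rw [triangleSum, oddTriangleSum]
  simp only [oddRow_eq_evenRow_add b, mul_add]
  rw [sum_add_distrib, shift, ← sum_add_distrib]
  refine sum_congr rfl fun t _ => ?_
  rw [sum_alphaWeight_mul_evenRow_succ, sum_range_succ]
  ring

theorem triangleSum_evenRow_evenRow_succ (a b : ℕ) {N : ℕ} (ha : a < N) (hb : b < N) :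
    triangleSum (evenRow a) (evenRow (b + 1)) N
      = oddTriangleSum a b N + evenRow a 0 * evenRow (b + 1) 0 / 4 := by
  have hpartial : ∀ t, ∑ i ∈ range (t + 1), alphaWeight i * evenRow a i
      = (∑ i ∈ range (t + 1), oddRow a i - evenRow a (t + 1)) / 2 := fun t => by
    rw [eq_div_iff two_ne_zero, mul_comm, two_mul_sum_alphaWeight_mul]
    simp only [oddRow_eq_evenRow_add]
  have hshift := sum_range_succ_of_eq_zero (N := N)
    (f := fun i => evenRow a i * evenRow (b + 1) i) (by simp only [evenRow_eq_zero ha, zero_mul])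
  have h := sum_partialSum_oddRow_mul_oddRow a b hb
  have hdiag := sum_oddRow_mul_oddRow a b ha
  rw [oddTriangleSum] at h ⊢
  simp only [evenRow_succ_succ, mul_add, sum_add_distrib] at hshift
  simp only [triangleSum, hpartial, evenRow_succ_succ, div_mul_eq_mul_div, sub_mul, mul_add,
    ← sum_div, sum_add_distrib, sum_sub_distrib]
  linear_combination h / 2 - hshift / 2 + hdiag / 2

theorem abs_sq_sub_sq_mul_evenRow_add_swap (a b : ℕ) {i j : ℕ} (hij : i < j) :
    alphaWeight i * alphaWeight j * |(j : ℚ) ^ 2 - (i : ℚ) ^ 2| * evenRow (a + 1) i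
        * evenRow (b + 1) j
      + alphaWeight j * alphaWeight i * |(i : ℚ) ^ 2 - (j : ℚ) ^ 2| * evenRow (a + 1) j
        * evenRow (b + 1) i
    = alphaWeight i * ((((b : ℚ) + 1) ^ 2 - ((a : ℚ) + 1) ^ 2)
          * (evenRow (a + 1) i * evenRow (b + 1) j - evenRow (b + 1) i * evenRow (a + 1) j)
        + 2 * ((a : ℚ) + 1) * (2 * a + 1)
          * (evenRow a i * evenRow (b + 1) j - evenRow (b + 1) i * evenRow a j)
        + 2 * ((b : ℚ) + 1) * (2 * b + 1)
          * (evenRow b i * evenRow (a + 1) j - evenRow (a + 1) i * evenRow b j)) := by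
  have hαj : alphaWeight j = 1 := if_neg (by omega)
  have hsq : (i : ℚ) ^ 2 ≤ (j : ℚ) ^ 2 := by gcongr
  rw [hαj, abs_of_nonneg (sub_nonneg.2 hsq), abs_of_nonpos (sub_nonpos.2 hsq)]
  linear_combination (alphaWeight i * evenRow (b + 1) j) * sq_sub_sq_mul_evenRow_succ a i
    - (alphaWeight i * evenRow (b + 1) i) * sq_sub_sq_mul_evenRow_succ a j
    + (alphaWeight i * evenRow (a + 1) j) * sq_sub_sq_mul_evenRow_succ b i
    - (alphaWeight i * evenRow (a + 1) i) * sq_sub_sq_mul_evenRow_succ b j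

theorem sum_abs_sq_sub_sq_mul_evenRow_eq_triangleSum (a b : ℕ) {N : ℕ} (ha : a < N) (hb : b < N) :
    ∑ i ∈ range (a + 2), ∑ j ∈ range (b + 2),
      alphaWeight i * alphaWeight j * |(j : ℚ) ^ 2 - (i : ℚ) ^ 2| * evenRow (a + 1) i
        * evenRow (b + 1) j
    = (((b : ℚ) + 1) ^ 2 - ((a : ℚ) + 1) ^ 2)
          * (triangleSum (evenRow (a + 1)) (evenRow (b + 1)) N
            - triangleSum (evenRow (b + 1)) (evenRow (a + 1)) N)
        + 2 * ((a : ℚ) + 1) * (2 * a + 1)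
          * (triangleSum (evenRow a) (evenRow (b + 1)) N
            - triangleSum (evenRow (b + 1)) (evenRow a) N)
        + 2 * ((b : ℚ) + 1) * (2 * b + 1)
          * (triangleSum (evenRow b) (evenRow (a + 1)) N
            - triangleSum (evenRow (a + 1)) (evenRow b) N) := by
  set F : ℕ → ℕ → ℚ := fun i j =>
    alphaWeight i * alphaWeight j * |(j : ℚ) ^ 2 - (i : ℚ) ^ 2| * evenRow (a + 1) i
      * evenRow (b + 1) j
  have hext : ∑ i ∈ range (a + 2), ∑ j ∈ range (b + 2), F i j
      = ∑ i ∈ range (N + 1), ∑ j ∈ range (N + 1), F i j := by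
    refine sum_subset (range_subset_range.2 (by omega)) (fun i _ hi => ?_) |>.trans
      (sum_congr rfl fun i _ => sum_subset (range_subset_range.2 (by omega)) (fun j _ hj => ?_))
    · refine sum_eq_zero fun j _ => ?_
      simp only [F, evenRow_eq_zero (not_lt.1 (hi ∘ mem_range.2)), mul_zero, zero_mul]
    · simp only [F, evenRow_eq_zero (not_lt.1 (hj ∘ mem_range.2)), mul_zero]
  rw [hext, sum_range_sum_range_of_diag_eq_zero F (fun i => by simp [F]) N]
  simp only [triangleSum, sum_mul, ← sum_sub_distrib, mul_sum, ← sum_add_distrib]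
  refine sum_congr rfl fun t _ => sum_congr rfl fun i hi => ?_
  rw [abs_sq_sub_sq_mul_evenRow_add_swap a b (mem_range.1 hi)]
  ring

theorem sum_abs_sq_sub_sq_mul_evenRow (a b : ℕ) {N : ℕ} (ha : a < N) (hb : b < N) :
    ∑ i ∈ range (a + 2), ∑ j ∈ range (b + 2),
      alphaWeight i * alphaWeight j * |(j : ℚ) ^ 2 - (i : ℚ) ^ 2| * evenRow (a + 1) i
        * evenRow (b + 1) j
    = ((a : ℚ) + 1) * ((b : ℚ) + 1) / 2 * evenRow (a + 1) 0 * evenRow (b + 1) 0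
      + 2 * ((b : ℚ) - a) * (triangleSum (evenRow (a + 1)) (evenRow b) N
        - triangleSum (evenRow (b + 1)) (evenRow a) N) := by
  rw [sum_abs_sq_sub_sq_mul_evenRow_eq_triangleSum a b ha hb,
    triangleSum_evenRow_succ_evenRow_succ a b hb, triangleSum_evenRow_succ_evenRow_succ b a ha,
    triangleSum_evenRow_evenRow_succ a b ha hb, triangleSum_evenRow_evenRow_succ b a hb ha,
    triangleSum_evenRow_succ_evenRow a b hb.le, triangleSum_evenRow_succ_evenRow b a ha.le]
  have hcomm : ∑ t ∈ range N, oddRow b t * oddRow a t = ∑ t ∈ range N, oddRow a t * oddRow b t :=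
    sum_congr rfl fun t _ => mul_comm _ _
  have hW := sum_oddRow_wronskian a b ha
  have hKa := sq_sub_sq_mul_evenRow_succ a 0
  have hKb := sq_sub_sq_mul_evenRow_succ b 0
  simp only [evenRow_succ_zero, CharP.cast_eq_zero] at hKa hKb ⊢
  linear_combination (-(((b : ℚ) + 1) ^ 2 - ((a : ℚ) + 1) ^ 2)) * hcomm - ((b : ℚ) - a) * hW
    - (oddRow b 0 / 2) * hKa - (oddRow a 0 / 2) * hKb

end CentralBinomialRow

open Finset CentralBinomialRow in
/-- Lemma 7.2 (Lemma 1) of Krattenthaler–Schneider. -/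
theorem abs_double_sum_decomposition (m n : ℕ) (hm : 1 ≤ m) (hn : 1 ≤ n) :
    ∑ i ∈ Finset.range (n + 1), ∑ j ∈ Finset.range (m + 1),
      alphaWeight i * alphaWeight j * |(j : ℚ) ^ 2 - (i : ℚ) ^ 2| *
        ((2 * n).choose (n + i) : ℚ) * ((2 * m).choose (m + j) : ℚ)
    = ((n : ℚ) * (m : ℚ) / 2) * ((2 * n).choose n : ℚ) * ((2 * m).choose m : ℚ)
      + 2 * ((m : ℚ) - (n : ℚ)) *
          ∑ j ∈ Finset.Icc 1 (n + m), ∑ i ∈ Finset.range j,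
            alphaWeight i *
              (((2 * n).choose (n + i) : ℚ) * ((2 * m - 2).choose (m + j - 1) : ℚ)
                - ((2 * n - 2).choose (n + j - 1) : ℚ) * ((2 * m).choose (m + i) : ℚ)) := by
  obtain ⟨a, rfl⟩ := Nat.exists_eq_add_of_le' hn
  obtain ⟨b, rfl⟩ := Nat.exists_eq_add_of_le' hm
  have hpred : ∀ q j, ((2 * (q + 1) - 2).choose (q + 1 + j - 1) : ℚ) = evenRow q j := fun q j => by
    rw [evenRow, show 2 * (q + 1) - 2 = 2 * q by omega, show q + 1 + j - 1 = q + j by omega]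
  have hmain := sum_abs_sq_sub_sq_mul_evenRow a b (N := a + 1 + (b + 1)) (by omega) (by omega)
  simp only [triangleSum_eq_sum_Icc, ← sum_sub_distrib, ← mul_sub] at hmain
  simp only [hpred]
  push_cast
  rw [show (b : ℚ) + 1 - (a + 1) = b - a by ring]
  simp only [mul_comm (evenRow a _)]
  exact hmain
end

section
/- Let m and n be integers with m ≥ 1 and n ≥ 1, and set α(i) = 1/2 if i = 0 and α(i) = 1 otherwise. Then, as an identity of rational numbers, 4 · ∑_{j=1}^{n+m} ∑_{i=0}^{j−1} α(i) · ( C(2n−2, n+j−1)·C(2m, m+i) − C(2n, n+i)·C(2m−2, m+j−1) ) + ∑_{j=1}^{n+m} ∑_{i=0}^{j−1} α(i) · ( C(2n, n+i)·C(2m, m+j) − C(2n, n+j)·C(2m, m+i) ) = −((m − n)/(4(m + n))) · C(2n, n) · C(2m, m), where m − n is taken in ℚ (it may be negative), and the range j ≤ n+m covers all nonzero terms since the binomial coefficients vanish beyond it. -/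
namespace KSaux

def uQ (a j : ℕ) : ℚ := ((2*a).choose (a+j) : ℚ)
def pQ (a j : ℕ) : ℚ := ((2*a+2).choose (a+1+j) : ℚ)
def AQ (a j : ℕ) : ℚ := ∑ i ∈ Finset.range j, alphaWeight i * pQ a i
def rr (a b j : ℚ) : ℚ :=
  (a-b)*(4*j*(a+b+2)-(4*a*b+4*a+4*b+5))/((a+b+2)*(a+j)*(b+j))
def TQ (a b j : ℕ) : ℚ :=
  (uQ b j - uQ b (j-1)) * AQ a j - (uQ a j - uQ a (j-1)) * AQ b j
    + rr a b j * uQ a (j-1) * uQ b (j-1)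

lemma uQ_rec (a j : ℕ) :
    ((a:ℚ)+j+1) * uQ a (j+1) = ((a:ℚ)-j) * uQ a j := by
  rcases le_or_gt j a with h | h
  · have h1 := Nat.choose_succ_right_eq (2*a) (a+j)
    rw [show 2*a - (a+j) = a - j from by omega] at h1
    have h3 := congrArg (fun t : ℕ => (t : ℚ)) h1
    push_cast [Nat.cast_sub h] at h3
    unfold uQ
    have e : a+(j+1) = a+j+1 := rfl
    rw [e]
    linear_combination h3
  · have h1 : (2*a).choose (a+(j+1)) = 0 := Nat.choose_eq_zero_of_lt (by omega)
    have h2 : (2*a).choose (a+j) = 0 := Nat.choose_eq_zero_of_lt (by omega)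
    unfold uQ
    rw [h1, h2]
    simp

lemma uQ_succ (a j : ℕ) : uQ a (j+1) = (((a:ℚ)-j)/((a:ℚ)+j+1)) * uQ a j := by
  have hne : ((a:ℚ)+j+1) ≠ 0 := by positivity
  rw [div_mul_eq_mul_div, eq_div_iff hne]
  linear_combination uQ_rec a j

lemma pQ_succ (a j : ℕ) : pQ a (j+1) = uQ a (j+1+1) + 2*uQ a (j+1) + uQ a j := by
  unfold pQ uQ
  have h : (2*a+2).choose (a+1+(j+1))
      = ((2*a).choose (a+j) + (2*a).choose (a+j+1))
        + ((2*a).choose (a+j+1) + (2*a).choose (a+j+2)) := by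
    have e1 : a+1+(j+1) = (a+j+1)+1 := by omega
    have e2 : 2*a+2 = (2*a+1)+1 := by omega
    rw [e1, e2, Nat.choose_succ_succ]
    have e3 : (2*a+1) = (2*a)+1 := rfl
    have e4 : a+j+1 = (a+j)+1 := rfl
    rw [e3, e4, Nat.choose_succ_succ, Nat.choose_succ_succ]
  rw [h]
  have e5 : a+(j+1+1) = a+j+2 := by omega
  have e6 : a+(j+1) = a+j+1 := by omega
  rw [e5, e6]
  push_cast
  ring

lemma pQ_zero (a : ℕ) : pQ a 0 = 2*(uQ a 1 + uQ a 0) := by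
  unfold pQ uQ
  have h : (2*a+2).choose (a+1+0) = ((2*a).choose a + (2*a).choose (a+1))
      + ((2*a).choose a + (2*a).choose (a+1)) := by
    have e2 : 2*a+2 = (2*a+1)+1 := by omega
    have e1 : a+1+0 = a+1 := rfl
    rw [e1, e2, Nat.choose_succ_succ]
    have h2 : (2*a+1).choose (a+1) = (2*a).choose a + (2*a).choose (a+1) := by
      have e : (2*a+1) = (2*a)+1 := rfl
      rw [e, Nat.choose_succ_succ]
    have h3 : (2*a+1).choose a = (2*a+1).choose (a+1) := by
      rw [← Nat.choose_symm (by omega : a ≤ 2*a+1)]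
      congr 1
      omega
    rw [h3, h2]
  rw [h]
  push_cast
  ring

lemma AQ_succ_succ (a j : ℕ) : AQ a (j+1+1) = AQ a (j+1) + pQ a (j+1) := by
  unfold AQ
  rw [Finset.sum_range_succ]
  have : alphaWeight (j+1) = 1 := by unfold alphaWeight; simp
  rw [this, one_mul]

lemma AQ_one (a : ℕ) : AQ a 1 = (1/2) * pQ a 0 := by
  unfold AQ
  rw [Finset.sum_range_one]
  unfold alphaWeight
  simp

set_option maxHeartbeats 1000000 in
lemma pure_id (a b j : ℕ) :
    rr a b ((j+1 : ℕ) : ℚ) * uQ a j * uQ b j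
      - rr a b ((j+1+1 : ℕ) : ℚ) * uQ a (j+1) * uQ b (j+1)
    = 3*(uQ a (j+1) * uQ b (j+1+1) - uQ a (j+1+1) * uQ b (j+1))
      + (uQ a j * uQ b (j+1+1) - uQ a (j+1+1) * uQ b j)
      + (uQ a (j+1) * uQ b j - uQ a j * uQ b (j+1)) := by
  have hD : (((a:ℚ)+b+2)*((a:ℚ)+j+1)*((b:ℚ)+j+1)*((a:ℚ)+j+2)*((b:ℚ)+j+2)) ≠ 0 := by
    positivity
  apply mul_left_cancel₀ hD
  have hU1 := uQ_rec a j
  have hV1 := uQ_rec b j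
  have hU2 : ((a:ℚ)+j+2) * uQ a (j+1+1) = ((a:ℚ)-j-1) * uQ a (j+1) := by
    have h := uQ_rec a (j+1)
    push_cast at h
    linear_combination h
  have hV2 : ((b:ℚ)+j+2) * uQ b (j+1+1) = ((b:ℚ)-j-1) * uQ b (j+1) := by
    have h := uQ_rec b (j+1)
    push_cast at h
    linear_combination h
  have hr1 : rr (a:ℚ) (b:ℚ) (((j:ℕ)+1 : ℕ) : ℚ)
        * (((a:ℚ)+(b:ℚ)+2)*((a:ℚ)+((j+1:ℕ):ℚ))*((b:ℚ)+((j+1:ℕ):ℚ)))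
      = ((a:ℚ)-(b:ℚ))*(4*((j+1:ℕ):ℚ)*((a:ℚ)+(b:ℚ)+2)
          -(4*(a:ℚ)*(b:ℚ)+4*(a:ℚ)+4*(b:ℚ)+5)) := by
    unfold rr
    exact div_mul_cancel₀ _ (by push_cast; positivity)
  have hr2 : rr (a:ℚ) (b:ℚ) (((j:ℕ)+1+1 : ℕ) : ℚ)
        * (((a:ℚ)+(b:ℚ)+2)*((a:ℚ)+((j+1+1:ℕ):ℚ))*((b:ℚ)+((j+1+1:ℕ):ℚ)))
      = ((a:ℚ)-(b:ℚ))*(4*((j+1+1:ℕ):ℚ)*((a:ℚ)+(b:ℚ)+2)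
          -(4*(a:ℚ)*(b:ℚ)+4*(a:ℚ)+4*(b:ℚ)+5)) := by
    unfold rr
    exact div_mul_cancel₀ _ (by push_cast; positivity)
  push_cast at hr1 hr2 ⊢
  have hU02 : (((a:ℚ)+j+1)*((a:ℚ)+j+2))*uQ a (j+1+1)
      = (((a:ℚ)-j-1)*((a:ℚ)-j))*uQ a j := by
    linear_combination ((a:ℚ)+j+1)*hU2 + ((a:ℚ)-j-1)*hU1
  have hV02 : (((b:ℚ)+j+1)*((b:ℚ)+j+2))*uQ b (j+1+1)
      = (((b:ℚ)-j-1)*((b:ℚ)-j))*uQ b j := by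
    linear_combination ((b:ℚ)+j+1)*hV2 + ((b:ℚ)-j-1)*hV1
  have W1m : (((a:ℚ)+j+1)*((b:ℚ)+j+1))*(uQ a j*uQ b (j+1) - uQ a (j+1)*uQ b j)
      = ((b:ℚ)-a)*(2*(j:ℚ)+1)*(uQ a j*uQ b j) := by
    linear_combination (((a:ℚ)+j+1)*uQ a j)*hV1 - (((b:ℚ)+j+1)*uQ b j)*hU1
  have W2m : (((a:ℚ)+j+2)*((b:ℚ)+j+2))*(uQ a (j+1)*uQ b (j+1+1) - uQ a (j+1+1)*uQ b (j+1))
      = ((b:ℚ)-a)*(2*(j:ℚ)+3)*(uQ a (j+1)*uQ b (j+1)) := by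
    linear_combination (((a:ℚ)+j+2)*uQ a (j+1))*hV2 - (((b:ℚ)+j+2)*uQ b (j+1))*hU2
  have Xm : (((a:ℚ)+j+1)*((a:ℚ)+j+2)*((b:ℚ)+j+1)*((b:ℚ)+j+2))
        *(uQ a j*uQ b (j+1+1) - uQ a (j+1+1)*uQ b j)
      = (((b:ℚ)-j-1)*((b:ℚ)-j)*((a:ℚ)+j+1)*((a:ℚ)+j+2)
          - ((a:ℚ)-j-1)*((a:ℚ)-j)*((b:ℚ)+j+1)*((b:ℚ)+j+2))*(uQ a j*uQ b j) := by
    linear_combination ((((a:ℚ)+j+1)*((a:ℚ)+j+2))*uQ a j)*hV02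
      - ((((b:ℚ)+j+1)*((b:ℚ)+j+2))*uQ b j)*hU02
  have Rm : (((a:ℚ)+j+1)*((b:ℚ)+j+1))*(uQ a (j+1)*uQ b (j+1))
      = (((a:ℚ)-j)*((b:ℚ)-j))*(uQ a j*uQ b j) := by
    linear_combination (((a:ℚ)-j)*uQ a j)*hV1 + (((b:ℚ)+j+1)*uQ b (j+1))*hU1
  linear_combination
    ((((a:ℚ)+j+2)*((b:ℚ)+j+2))*(uQ a j*uQ b j))*hr1
    - ((((a:ℚ)+j+1)*((b:ℚ)+j+1))*(uQ a (j+1)*uQ b (j+1)))*hr2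
    - 3*(((a:ℚ)+b+2)*((a:ℚ)+j+1)*((b:ℚ)+j+1))*W2m
    - ((a:ℚ)+b+2)*Xm
    + (((a:ℚ)+b+2)*((a:ℚ)+j+2)*((b:ℚ)+j+2))*W1m
    - (((a:ℚ)-b)*(4*((j:ℚ)+2)*((a:ℚ)+b+2)-(4*(a:ℚ)*b+4*(a:ℚ)+4*(b:ℚ)+5))
        + 3*((a:ℚ)+b+2)*((b:ℚ)-a)*(2*(j:ℚ)+3))*Rm

set_option maxHeartbeats 1000000 in
lemma point (a b j : ℕ) :
    4*(uQ a (j+1) * AQ b (j+1) - AQ a (j+1) * uQ b (j+1))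
      + (pQ b (j+1) * AQ a (j+1) - pQ a (j+1) * AQ b (j+1))
    = TQ a b (j+1+1) - TQ a b (j+1) := by
  unfold TQ
  rw [show j+1+1-1 = j+1 from by omega, show j+1-1 = j from by omega]
  rw [AQ_succ_succ a j, AQ_succ_succ b j, pQ_succ a j, pQ_succ b j]
  linear_combination pure_id a b j

lemma TQ_top (a b : ℕ) : TQ a b (a+1+(b+1)+1) = 0 := by
  have e1 : uQ a (a+1+(b+1)+1) = 0 := by
    unfold uQ
    norm_cast
    exact Nat.choose_eq_zero_of_lt (by omega)
  have e2 : uQ a (a+1+(b+1)+1-1) = 0 := by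
    unfold uQ
    norm_cast
    exact Nat.choose_eq_zero_of_lt (by omega)
  have e3 : uQ b (a+1+(b+1)+1) = 0 := by
    unfold uQ
    norm_cast
    exact Nat.choose_eq_zero_of_lt (by omega)
  have e4 : uQ b (a+1+(b+1)+1-1) = 0 := by
    unfold uQ
    norm_cast
    exact Nat.choose_eq_zero_of_lt (by omega)
  unfold TQ
  rw [e1, e2, e3, e4]
  ring

lemma TQ_one (a b : ℕ) :
    TQ a b 1 = (((b:ℚ)-a)/(4*((a:ℚ)+b+2))) * (pQ a 0 * pQ b 0) := by
  have hU1 := uQ_succ a 0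
  have hV1 := uQ_succ b 0
  have h1 : ((a:ℚ)+1) ≠ 0 := by positivity
  have h3 : ((b:ℚ)+1) ≠ 0 := by positivity
  have h5 : ((a:ℚ)+b+2) ≠ 0 := by positivity
  unfold TQ
  rw [show (1:ℕ)-1 = 0 from rfl]
  rw [AQ_one a, AQ_one b, pQ_zero a, pQ_zero b, hU1, hV1]
  unfold rr
  push_cast
  field_simp
  ring

lemma inner1 (a b j : ℕ) :
    ∑ i ∈ Finset.range j, alphaWeight i *
      (((2*a).choose (a+j) : ℚ) * ((2*b+2).choose (b+1+i) : ℚ)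
        - ((2*a+2).choose (a+1+i) : ℚ) * ((2*b).choose (b+j) : ℚ))
    = uQ a j * AQ b j - AQ a j * uQ b j := by
  unfold AQ uQ pQ
  simp only [Finset.mul_sum, Finset.sum_mul]
  rw [← Finset.sum_sub_distrib]
  exact Finset.sum_congr rfl (fun i _ => by ring)

lemma inner2 (a b j : ℕ) :
    ∑ i ∈ Finset.range j, alphaWeight i *
      (((2*a+2).choose (a+1+i) : ℚ) * ((2*b+2).choose (b+1+j) : ℚ)
        - ((2*a+2).choose (a+1+j) : ℚ) * ((2*b+2).choose (b+1+i) : ℚ))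
    = pQ b j * AQ a j - pQ a j * AQ b j := by
  unfold AQ pQ
  simp only [Finset.mul_sum, Finset.sum_mul]
  rw [← Finset.sum_sub_distrib]
  exact Finset.sum_congr rfl (fun i _ => by ring)

end KSaux

open KSaux in
/-- Lemma 7.3 (Lemma 2) of Krattenthaler–Schneider. -/
theorem abs_double_sum_gosper_identity (m n : ℕ) (hm : 1 ≤ m) (hn : 1 ≤ n) :
    4 * (∑ j ∈ Finset.Icc 1 (n + m), ∑ i ∈ Finset.range j,
          alphaWeight i *
            (((2 * n - 2).choose (n + j - 1) : ℚ) * ((2 * m).choose (m + i) : ℚ)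
              - ((2 * n).choose (n + i) : ℚ) * ((2 * m - 2).choose (m + j - 1) : ℚ)))
      + (∑ j ∈ Finset.Icc 1 (n + m), ∑ i ∈ Finset.range j,
          alphaWeight i *
            (((2 * n).choose (n + i) : ℚ) * ((2 * m).choose (m + j) : ℚ)
              - ((2 * n).choose (n + j) : ℚ) * ((2 * m).choose (m + i) : ℚ)))
    = -(((m : ℚ) - (n : ℚ)) / (4 * ((m : ℚ) + (n : ℚ)))) *
        ((2 * n).choose n : ℚ) * ((2 * m).choose m : ℚ) := by
  obtain ⟨a, rfl⟩ : ∃ a, n = a + 1 := ⟨n - 1, by omega⟩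
  obtain ⟨b, rfl⟩ : ∃ b, m = b + 1 := ⟨m - 1, by omega⟩
  rw [show 2*(a+1)-2 = 2*a from by omega, show 2*(b+1)-2 = 2*b from by omega,
      show 2*(a+1) = 2*a+2 from by omega, show 2*(b+1) = 2*b+2 from by omega]
  simp only [show ∀ j:ℕ, a+1+j-1 = a+j from fun j => by omega,
             show ∀ j:ℕ, b+1+j-1 = b+j from fun j => by omega]
  have e1 : (∑ j ∈ Finset.Icc 1 (a+1+(b+1)), ∑ i ∈ Finset.range j,
      alphaWeight i *
        (((2*a).choose (a+j) : ℚ) * ((2*b+2).choose (b+1+i) : ℚ)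
          - ((2*a+2).choose (a+1+i) : ℚ) * ((2*b).choose (b+j) : ℚ)))
      = ∑ j ∈ Finset.Icc 1 (a+1+(b+1)), (uQ a j * AQ b j - AQ a j * uQ b j) :=
    Finset.sum_congr rfl (fun j _ => inner1 a b j)
  have e2 : (∑ j ∈ Finset.Icc 1 (a+1+(b+1)), ∑ i ∈ Finset.range j,
      alphaWeight i *
        (((2*a+2).choose (a+1+i) : ℚ) * ((2*b+2).choose (b+1+j) : ℚ)
          - ((2*a+2).choose (a+1+j) : ℚ) * ((2*b+2).choose (b+1+i) : ℚ)))
      = ∑ j ∈ Finset.Icc 1 (a+1+(b+1)), (pQ b j * AQ a j - pQ a j * AQ b j) :=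
    Finset.sum_congr rfl (fun j _ => inner2 a b j)
  rw [e1, e2, Finset.mul_sum, ← Finset.sum_add_distrib]
  have e3 : ∑ j ∈ Finset.Icc 1 (a+1+(b+1)),
      (4*(uQ a j * AQ b j - AQ a j * uQ b j) + (pQ b j * AQ a j - pQ a j * AQ b j))
      = ∑ j ∈ Finset.range (a+1+(b+1)),
        (TQ a b (j+1+1) - TQ a b (j+1)) := by
    rw [← Finset.Ico_add_one_right_eq_Icc, Finset.sum_Ico_eq_sum_range]
    rw [show a+1+(b+1)+1-1 = a+1+(b+1) from by omega]
    refine Finset.sum_congr rfl (fun j _ => ?_)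
    rw [show 1+j = j+1 from by omega]
    exact point a b j
  have e4 : ∑ j ∈ Finset.range (a+1+(b+1)), (TQ a b (j+1+1) - TQ a b (j+1))
      = TQ a b (a+1+(b+1)+1) - TQ a b (0+1) :=
    Finset.sum_range_sub (fun j => TQ a b (j+1)) (a+1+(b+1))
  rw [e3, e4, TQ_top a b, show (0:ℕ)+1 = 1 from rfl, TQ_one a b]
  have hp : ((2*a+2).choose (a+1) : ℚ) = pQ a 0 := by unfold pQ; norm_num
  have hq : ((2*b+2).choose (b+1) : ℚ) = pQ b 0 := by unfold pQ; norm_num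
  rw [hp, hq]
  push_cast
  have h5 : ((a:ℚ)+b+2) ≠ 0 := by positivity
  field_simp
  ring
end

section
/- Let m, n, i, j be integers with m ≥ n ≥ 1 and 0 ≤ i < j. Then C(2n, n+i) · C(2m−2, m+j−1) ≥ C(2n−2, n+j−1) · C(2m, m+i). Moreover, if in addition j ≤ n−1, then equality holds if and only if m = n. -/
lemma idgen (n k : ℕ) :
    (k + 1) * ((n + 1) - k) * ((n + 2).choose (k + 1)) = (n + 2) * (n + 1) * n.choose k := by
  have h1 : (n + 2).choose (k + 1) * (k + 1) = (n + 2) * (n + 1).choose k := by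
    rw [← Nat.add_one_mul_choose_eq]
  have h2 : (n + 1).choose k * (n + 1 - k) = n.choose k * (n + 1) := by
    rw [Nat.choose_mul_succ_eq]
  calc (k + 1) * ((n + 1) - k) * ((n + 2).choose (k + 1))
      = ((n + 1) - k) * ((n + 2).choose (k + 1) * (k + 1)) := by ring
    _ = ((n + 1) - k) * ((n + 2) * (n + 1).choose k) := by rw [h1]
    _ = (n + 2) * ((n + 1).choose k * (n + 1 - k)) := by ring
    _ = (n + 2) * (n.choose k * (n + 1)) := by rw [h2]
    _ = (n + 2) * (n + 1) * n.choose k := by ring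

lemma step_lt (k i j : ℕ) (hij : i < j) (hjk : j + 1 ≤ k) :
    (2 * k - 2).choose (k + j - 1) * (2 * (k + 1)).choose (k + 1 + i)
      < (2 * k).choose (k + i) * (2 * k).choose (k + j) := by
  set a := (2 * k - 2).choose (k + j - 1) with ha'
  set z := (2 * (k + 1)).choose (k + 1 + i) with hz'
  set x := (2 * k).choose (k + i) with hx'
  set y := (2 * k).choose (k + j) with hy'
  have h1 : ((k + 1 + i) * (k + 1 - i)) * z = (2 * k + 2) * (2 * k + 1) * x := by
    have := idgen (2 * k) (k + i)
    rw [show (2 * k + 1) - (k + i) = k + 1 - i from by omega] at this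
    rw [hz', hx', show 2 * (k + 1) = 2 * k + 2 from by ring,
      show k + 1 + i = (k + i) + 1 from by ring]
    exact this
  have h2 : ((k + j) * (k - j)) * y = (2 * k) * (2 * k - 1) * a := by
    have := idgen (2 * k - 2) (k + j - 1)
    rw [show (k + j - 1) + 1 = k + j from by omega,
      show (2 * k - 2 + 1) - (k + j - 1) = k - j from by omega,
      show 2 * k - 2 + 2 = 2 * k from by omega,
      show 2 * k - 2 + 1 = 2 * k - 1 from by omega] at this
    rw [hy', ha']
    calc ((k + j) * (k - j)) * (2 * k).choose (k + j)
        = (k + j) * (k - j) * ((2 * k).choose (k + j)) := by ring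
      _ = 2 * k * (2 * k - 1) * (2 * k - 2).choose (k + j - 1) := this
  have hxpos : 0 < x := Nat.choose_pos (by omega)
  have hapos : 0 < a := Nat.choose_pos (by omega)
  have hnum : ((k + j) * (k - j)) * ((2 * k + 2) * (2 * k + 1))
      < ((k + 1 + i) * (k + 1 - i)) * ((2 * k) * (2 * k - 1)) := by
    obtain ⟨d, rfl⟩ : ∃ d, k = j + 1 + d := ⟨k - j - 1, by omega⟩
    obtain ⟨e, rfl⟩ : ∃ e, j = i + 1 + e := ⟨j - i - 1, by omega⟩
    rw [show i + 1 + e + 1 + d - (i + 1 + e) = d + 1 from by omega,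
      show i + 1 + e + 1 + d + 1 - i = e + d + 3 from by omega,
      show 2 * (i + 1 + e + 1 + d) - 1 = 2 * i + 2 * e + 2 * d + 3 from by omega]
    have key : (i + 1 + e + 1 + d + 1 + i) * (e + d + 3)
          * (2 * (i + 1 + e + 1 + d) * (2 * i + 2 * e + 2 * d + 3))
        = (i + 1 + e + 1 + d + (i + 1 + e)) * (d + 1)
            * ((2 * (i + 1 + e + 1 + d) + 2) * (2 * (i + 1 + e + 1 + d) + 1))
          + (18 + 12 * d + 2 * d * d + 72 * e + 48 * e * d + 8 * e * d * d + 76 * e * e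
            + 38 * e * e * d + 4 * e * e * d * d + 30 * e * e * e + 8 * e * e * e * d
            + 4 * e * e * e * e + 72 * i + 48 * i * d + 8 * i * d * d + 152 * i * e
            + 76 * i * e * d + 8 * i * e * d * d + 90 * i * e * e + 24 * i * e * e * d
            + 16 * i * e * e * e + 64 * i * i + 24 * i * i * d + 76 * i * i * e
            + 16 * i * i * e * d + 20 * i * i * e * e + 16 * i * i * i + 8 * i * i * i * e) := by
      ring
    omega
  apply Nat.lt_of_mul_lt_mul_left
    (a := ((k + 1 + i) * (k + 1 - i)) * ((k + j) * (k - j)))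
  calc ((k + 1 + i) * (k + 1 - i)) * ((k + j) * (k - j)) * (a * z)
      = ((k + j) * (k - j)) * a * (((k + 1 + i) * (k + 1 - i)) * z) := by ring
    _ = ((k + j) * (k - j)) * a * ((2 * k + 2) * (2 * k + 1) * x) := by rw [h1]
    _ = ((k + j) * (k - j)) * ((2 * k + 2) * (2 * k + 1)) * (a * x) := by ring
    _ < ((k + 1 + i) * (k + 1 - i)) * ((2 * k) * (2 * k - 1)) * (a * x) :=
        Nat.mul_lt_mul_of_lt_of_le hnum (le_refl _) (Nat.mul_pos hapos hxpos)
    _ = ((k + 1 + i) * (k + 1 - i)) * x * ((2 * k) * (2 * k - 1) * a) := by ring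
    _ = ((k + 1 + i) * (k + 1 - i)) * x * (((k + j) * (k - j)) * y) := by rw [h2]
    _ = ((k + 1 + i) * (k + 1 - i)) * ((k + j) * (k - j)) * (x * y) := by ring

lemma main_lt (n i j : ℕ) (hij : i < j) (hjn : j + 1 ≤ n) :
    ∀ m, n < m →
      (2 * n - 2).choose (n + j - 1) * (2 * m).choose (m + i)
        < (2 * n).choose (n + i) * (2 * m - 2).choose (m + j - 1) := by
  intro m hm
  induction m, hm using Nat.le_induction with
  | base =>
      have h := step_lt n i j hij hjn
      rw [show 2 * (n + 1) - 2 = 2 * n from by omega,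
        show n + 1 + j - 1 = n + j from by omega]
      exact h
  | succ m hm ih =>
      have hstep := step_lt m i j hij (by omega)
      rw [show 2 * (m + 1) - 2 = 2 * m from by omega,
        show m + 1 + j - 1 = m + j from by omega]
      -- goal: C(2n-2,n+j-1) * C(2(m+1), m+1+i) < C(2n,n+i) * C(2m, m+j)
      set a := (2 * n - 2).choose (n + j - 1)
      set b := (2 * n).choose (n + i)
      set c := (2 * m - 2).choose (m + j - 1)
      set x := (2 * m).choose (m + i)
      set y := (2 * m).choose (m + j)
      set z := (2 * (m + 1)).choose (m + 1 + i)
      have hxpos : 0 < x := Nat.choose_pos (by omega)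
      have hcpos : 0 < c := Nat.choose_pos (by omega)
      have hypos : 0 < y := Nat.choose_pos (by omega)
      have hbpos : 0 < b := Nat.choose_pos (by omega)
      -- ih : a * x < b * c ; hstep : c * z < x * y ; goal a * z < b * y
      apply Nat.lt_of_mul_lt_mul_right (a := x * c)
      calc a * z * (x * c) = (a * x) * (c * z) := by ring
        _ < (b * c) * (x * y) :=
            Nat.mul_lt_mul_of_lt_of_le ih (le_of_lt hstep)
              (Nat.mul_pos hxpos hypos)
        _ = b * y * (x * c) := by ring



/-- Lemma 7.4 (Lemma 3) of Krattenthaler–Schneider: a term-by-term inequality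
of products of binomial coefficients, with characterisation of the equality
case when `j ≤ n - 1`. -/
theorem binomial_product_inequality (m n i j : ℕ) (hn : 1 ≤ n) (hnm : n ≤ m)
    (hij : i < j) :
    (2 * n - 2).choose (n + j - 1) * (2 * m).choose (m + i)
      ≤ (2 * n).choose (n + i) * (2 * m - 2).choose (m + j - 1) ∧
    (j ≤ n - 1 →
      ((2 * n).choose (n + i) * (2 * m - 2).choose (m + j - 1)
          = (2 * n - 2).choose (n + j - 1) * (2 * m).choose (m + i)
        ↔ m = n)) := by
  constructor
  · by_cases hjn : j + 1 ≤ n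
    · rcases eq_or_lt_of_le hnm with rfl | hlt
      · exact le_of_eq (mul_comm _ _)
      · exact le_of_lt (main_lt n i j hij hjn m hlt)
    · have hz : (2 * n - 2).choose (n + j - 1) = 0 :=
        Nat.choose_eq_zero_of_lt (by omega)
      simp [hz]
  · intro hjn1
    have hjn : j + 1 ≤ n := by omega
    constructor
    · intro heq
      by_contra hne
      have hlt : n < m := lt_of_le_of_ne hnm (fun h => hne h.symm)
      have := main_lt n i j hij hjn m hlt
      omega
    · rintro rfl
      exact mul_comm _ _
end

section
/- For every integer n ≥ 1, as an identity of rational numbers, ∑_{i=−n}^{n} ∑_{j=−n}^{n} |j³ − i³| · C(2n, n+i) · C(2n, n+j) = (4n²(5n−2)/(4n−1)) · C(4n−1, 2n−1). -/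
/-!
Put `k = n + i`, `l = n + j`, `f k = (k - n)³` and `a k = C(2n, k)`. As `f` is increasing, the
double sum of `|f l - f k| a_k a_l` is a combination of `(∑ f_k a_k)(∑ a_k)`, `∑ f_k a_k²` and
`∑_k a_k ∑_{l<k} f_l a_l`. The first two vanish because `f` is odd and `a` even about `n`. The
partial sums `∑_{l ≤ k} f_l a_l` have the closed form `-n (n² - k(2n-1-k)) C(2n-1, k)`, and after
absorbing the factor `k(2n-1-k)` into the binomials the remaining sum is two instances of
Vandermonde's convolution.
-/

/-- Binomial coefficient `C(a, b)` with natural upper index and integer lower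
index: it vanishes when `b < 0` (and also when `b > a`, via `Nat.choose`). -/
def zchoose (a : ℕ) (b : ℤ) : ℚ :=
  if 0 ≤ b then (a.choose b.toNat : ℚ) else 0

open Finset

theorem sum_range_sum_range_abs_sub_mul_mul {R : Type*} [CommRing R] [LinearOrder R]
    [IsStrictOrderedRing R] {f : ℕ → R} (hf : Monotone f) (a : ℕ → R) (N : ℕ) :
    ∑ k ∈ range N, ∑ l ∈ range N, |f l - f k| * a k * a l
      = 2 * ((∑ k ∈ range N, f k * a k) * ∑ k ∈ range N, a k - ∑ k ∈ range N, f k * a k ^ 2)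
        - 4 * ∑ k ∈ range N, a k * ∑ l ∈ range k, f l * a l := by
  induction N with
  | zero => simp
  | succ N ih =>
    have hrow : ∑ l ∈ range N, |f l - f N| * a N * a l
        = a N * (f N * ∑ l ∈ range N, a l - ∑ l ∈ range N, f l * a l) := by
      rw [mul_sub, mul_sum, mul_sum, mul_sum, ← sum_sub_distrib]
      refine sum_congr rfl fun l hl => ?_
      rw [abs_of_nonpos (sub_nonpos.2 (hf (mem_range.1 hl).le))]
      ring
    have hcol : ∑ k ∈ range N, |f N - f k| * a k * a N
        = a N * (f N * ∑ l ∈ range N, a l - ∑ l ∈ range N, f l * a l) := by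
      rw [← hrow]
      exact sum_congr rfl fun k _ => by rw [abs_sub_comm]; ring
    simp only [sum_range_succ, sum_add_distrib, ih, hrow, hcol, sub_self, abs_zero]
    ring

theorem sum_range_choose_mul_choose_add (a b s : ℕ) :
    ∑ i ∈ range (a + 1), a.choose i * b.choose (i + s) = (a + b).choose (a + s) := by
  induction a generalizing s with
  | zero => simp
  | succ a ih =>
    have hshift := sum_range_succ' (fun i => a.choose i * b.choose (i + s)) (a + 1)
    rw [sum_range_succ, Nat.choose_succ_self, zero_mul, add_zero, ih] at hshift
    calc ∑ i ∈ range (a + 1 + 1), (a + 1).choose i * b.choose (i + s)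
        = ∑ i ∈ range (a + 1), a.choose i * b.choose (i + (s + 1))
          + (∑ i ∈ range (a + 1), a.choose (i + 1) * b.choose (i + 1 + s)
            + a.choose 0 * b.choose (0 + s)) := by
          simp only [sum_range_succ' _ (a + 1), Nat.choose_succ_succ, add_mul, sum_add_distrib]
          simp only [Nat.choose_zero_right, add_right_comm _ 1 s, add_assoc]
      _ = (a + 1 + b).choose (a + 1 + s) := by
          rw [ih, ← hshift, add_right_comm a 1 b, add_right_comm a 1 s, Nat.choose_succ_succ',
            add_comm, add_assoc]

section Absorption

variable {R : Type*} [CommRing R]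

theorem Nat.cast_add_one_sub_mul_choose (M j : ℕ) :
    ((M : R) + 1 - j) * (M + 1).choose j = (M + 1) * M.choose j := by
  rcases le_or_gt j (M + 1) with hj | hj
  · have h := congrArg (Nat.cast : ℕ → R) (Nat.choose_mul_succ_eq M j)
    push_cast [hj] at h
    linear_combination -h
  · rw [Nat.choose_eq_zero_of_lt hj, Nat.choose_eq_zero_of_lt (by omega)]
    simp

theorem Nat.cast_add_one_mul_choose_add_one (M k : ℕ) :
    ((k : R) + 1) * (M + 1).choose (k + 1) = (M + 1) * M.choose k := by
  have h := congrArg (Nat.cast : ℕ → R) (Nat.add_one_mul_choose_eq M k)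
  push_cast at h
  linear_combination -h

end Absorption

section CharZero

variable {K : Type*} [Field K] [CharZero K]

theorem sum_range_cube_sub_half_mul_choose (N k : ℕ) :
    ∑ j ∈ range (k + 1), ((j : K) - N / 2) ^ 3 * N.choose j
      = -((N : K) / 2) * ((N / 2) ^ 2 - k * (N - 1 - k)) * ((N - 1).choose k : K) := by
  obtain _ | M := N
  · rw [sum_eq_zero fun j _ => by cases j <;> simp]
    simp
  rw [Nat.add_sub_cancel]
  induction k with
  | zero => simp; ring
  | succ k ih =>
    rw [sum_range_succ, ih]
    have h1 := Nat.cast_add_one_mul_choose_add_one (R := K) M k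
    have h2 := Nat.cast_add_one_sub_mul_choose (R := K) M (k + 1)
    apply mul_left_cancel₀ (Nat.cast_add_one_ne_zero (R := K) M)
    push_cast at h2 ⊢
    linear_combination (((M : K) + 1) / 2 * ((((M : K) + 1) / 2) ^ 2 - k * (M - k))) * h1
      - ((M + 1) / 2 * ((((M : K) + 1) / 2) ^ 2 - (k + 1) * (M - (k + 1)))) * h2

theorem sum_range_cube_sub_half_mul_choose_pow (N e : ℕ) :
    ∑ k ∈ range (N + 1), ((k : K) - N / 2) ^ 3 * (N.choose k : K) ^ e = 0 := by
  have h := sum_range_reflect (fun k => ((k : K) - N / 2) ^ 3 * (N.choose k : K) ^ e) (N + 1)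
  have hneg : ∀ k ∈ range (N + 1), ((N + 1 - 1 - k : ℕ) - (N : K) / 2) ^ 3
      * ((N.choose (N + 1 - 1 - k) : ℕ) : K) ^ e
        = -(((k : K) - N / 2) ^ 3 * (N.choose k : K) ^ e) := by
    intro k hk
    have hkN : k ≤ N := Nat.lt_succ_iff.1 (mem_range.1 hk)
    rw [Nat.add_sub_cancel, Nat.choose_symm hkN, Nat.cast_sub hkN]
    ring
  rw [sum_congr rfl hneg, sum_neg_distrib] at h
  exact self_eq_neg.1 h.symm

end CharZero

theorem sum_Icc_neg_natCast_eq_sum_range {M : Type*} [AddCommMonoid M] (n : ℕ) (g : ℤ → M) :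
    ∑ i ∈ Icc (-(n : ℤ)) n, g i = ∑ k ∈ range (2 * n + 1), g (k - n) := by
  symm
  refine sum_nbij' (fun k => (k : ℤ) - n) (fun i => (i + n).toNat) ?_ ?_ ?_ ?_ ?_ <;>
    intros <;> simp_all <;> omega

theorem zchoose_add_sub (N n k : ℕ) : zchoose N (n + ((k : ℤ) - n)) = N.choose k := by
  simp [zchoose]

theorem abs_cube_double_sum_eq_sum_range (n : ℕ) :
    ∑ i ∈ Icc (-(n : ℤ)) (n : ℤ), ∑ j ∈ Icc (-(n : ℤ)) (n : ℤ),
      ((|j ^ 3 - i ^ 3| : ℤ) : ℚ) * zchoose (2 * n) ((n : ℤ) + i)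
        * zchoose (2 * n) ((n : ℤ) + j)
    = 4 * n * ∑ m ∈ range (2 * n),
        ((n : ℚ) ^ 2 - m * (2 * n - 1 - m)) * (2 * n - 1).choose m * (2 * n).choose (m + 1) := by
  have hc : ((2 * n : ℕ) : ℚ) / 2 = n := by push_cast; ring
  have hpartial := sum_range_cube_sub_half_mul_choose (K := ℚ) (2 * n)
  have hsymm := sum_range_cube_sub_half_mul_choose_pow (K := ℚ) (2 * n)
  simp only [hc] at hpartial hsymm
  have hfirst : ∑ k ∈ range (2 * n + 1), ((k : ℚ) - n) ^ 3 * (2 * n).choose k = 0 := by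
    simpa using hsymm 1
  push_cast at hpartial
  have hmono : Monotone fun k : ℕ => ((k : ℚ) - n) ^ 3 :=
    fun k l hkl => (Odd.pow_le_pow (by decide)).2 (by gcongr)
  simp only [sum_Icc_neg_natCast_eq_sum_range, zchoose_add_sub]
  push_cast
  rw [sum_range_sum_range_abs_sub_mul_mul hmono, hsymm 2, hfirst, zero_mul, sub_zero, mul_zero,
    zero_sub, sum_range_succ']
  simp only [hpartial, range_zero, sum_empty, mul_zero, add_zero, mul_sum]
  rw [← sum_neg_distrib]
  exact sum_congr rfl fun m _ => by ring

theorem sum_range_sq_sub_mul_choose_mul_choose (n : ℕ) :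
    ∑ m ∈ range (2 * n), ((n : ℚ) ^ 2 - m * (2 * n - 1 - m)) * (2 * n - 1).choose m
        * (2 * n).choose (m + 1)
      = (n : ℚ) ^ 2 * (4 * n - 1).choose (2 * n)
        - 2 * n * (2 * n - 1) * (4 * n - 3).choose (2 * n) := by
  obtain _ | p := n
  · simp
  rw [show 2 * (p + 1) - 1 = 2 * p + 1 by omega, show 4 * (p + 1) - 1 = 4 * p + 3 by omega,
    show 4 * (p + 1) - 3 = 4 * p + 1 by omega, show 2 * (p + 1) = 2 * p + 1 + 1 by ring]
  have hconst := sum_range_choose_mul_choose_add (2 * p + 1) (2 * p + 1 + 1) 1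
  have hshift := sum_range_choose_mul_choose_add (2 * p) (2 * p + 1) 2
  rw [show 2 * p + 1 + (2 * p + 1 + 1) = 4 * p + 3 by ring] at hconst
  rw [show 2 * p + (2 * p + 1) = 4 * p + 1 by ring,
    show 2 * p + 2 = 2 * p + 1 + 1 by ring] at hshift
  have hquad : ∑ m ∈ range (2 * p + 1 + 1),
      (m * (2 * ((p : ℚ) + 1) - 1 - m) : ℚ) * (2 * p + 1).choose m * (2 * p + 1 + 1).choose (m + 1)
      = (2 * p + 1) * (2 * p + 2) * (4 * p + 1).choose (2 * p + 1 + 1) := by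
    rw [sum_range_succ', ← hshift]
    push_cast
    rw [mul_sum]
    simp only [zero_mul, add_zero]
    refine sum_congr rfl fun i _ => ?_
    have h1 := Nat.cast_add_one_mul_choose_add_one (R := ℚ) (2 * p) i
    have h2 := Nat.cast_add_one_sub_mul_choose (R := ℚ) (2 * p + 1) (i + 1 + 1)
    push_cast at h1 h2
    linear_combination
      ((2 * ((p : ℚ) + 1) - 1 - (i + 1)) * ((2 * p + 1 + 1).choose (i + 1 + 1) : ℚ)) * h1
        + ((2 * p + 1) * ((2 * p).choose i : ℚ)) * h2
  have hconstQ : ∑ m ∈ range (2 * p + 1 + 1), ((2 * p + 1).choose m : ℚ)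
      * (2 * p + 1 + 1).choose (m + 1) = (4 * p + 3).choose (2 * p + 1 + 1) := by
    exact_mod_cast hconst
  simp only [sub_mul, sum_sub_distrib]
  push_cast
  rw [hquad, ← hconstQ, mul_sum]
  simp only [mul_assoc]
  ring

theorem four_mul_add_three_mul_choose (p : ℕ) :
    (4 * p + 3) * (4 * p + 1).choose (2 * p + 2) = p * (4 * p + 3).choose (2 * p + 2) := by
  have h1 := Nat.choose_mul_succ_eq (4 * p + 2) (2 * p + 2)
  have h2 := Nat.choose_mul_succ_eq (4 * p + 1) (2 * p + 2)
  rw [show 4 * p + 2 + 1 - (2 * p + 2) = 2 * p + 1 by omega] at h1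
  rw [show 4 * p + 1 + 1 - (2 * p + 2) = 2 * p by omega] at h2
  apply Nat.eq_of_mul_eq_mul_right (show 0 < 4 * p + 2 by omega)
  nlinarith

theorem abs_cube_double_sum_general (n : ℕ) :
    ∑ i ∈ Finset.Icc (-(n : ℤ)) (n : ℤ), ∑ j ∈ Finset.Icc (-(n : ℤ)) (n : ℤ),
      ((|j ^ 3 - i ^ 3| : ℤ) : ℚ) *
        zchoose (2 * n) ((n : ℤ) + i) * zchoose (2 * n) ((n : ℤ) + j)
    = (4 * (n : ℚ) ^ 2 * (5 * (n : ℚ) - 2) / (4 * (n : ℚ) - 1)) *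
        ((4 * n - 1).choose (2 * n - 1) : ℚ) := by
  rw [abs_cube_double_sum_eq_sum_range, sum_range_sq_sub_mul_choose_mul_choose]
  obtain _ | p := n
  · simp
  have hratio : (4 * (p : ℚ) + 3) * (4 * p + 1).choose (2 * p + 2)
      = p * (4 * p + 3).choose (2 * p + 2) := by
    exact_mod_cast four_mul_add_three_mul_choose p
  rw [show 4 * (p + 1) - 1 = 4 * p + 3 by omega, show 4 * (p + 1) - 3 = 4 * p + 1 by omega,
    show 2 * (p + 1) - 1 = 2 * p + 1 by omega, show 2 * (p + 1) = 2 * p + 2 by ring,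
    Nat.choose_symm_of_eq_add (show 4 * p + 3 = (2 * p + 1) + (2 * p + 2) by ring)]
  have hden : 4 * ((p : ℚ) + 1) - 1 ≠ 0 := by linarith [p.cast_nonneg (α := ℚ)]
  push_cast
  rw [div_mul_eq_mul_div, eq_div_iff hden]
  linear_combination -8 * ((p : ℚ) + 1) ^ 2 * (2 * p + 1) * hratio

/-- Identity (6.1) of Krattenthaler–Schneider (conjectured as (5.7) by
Brent–Ohtsuka–Osborn–Prodinger). -/
theorem abs_cube_double_sum (n : ℕ) (hn : 1 ≤ n) :
    ∑ i ∈ Finset.Icc (-(n : ℤ)) (n : ℤ), ∑ j ∈ Finset.Icc (-(n : ℤ)) (n : ℤ),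
      ((|j ^ 3 - i ^ 3| : ℤ) : ℚ) *
        zchoose (2 * n) ((n : ℤ) + i) * zchoose (2 * n) ((n : ℤ) + j)
    = (4 * (n : ℚ) ^ 2 * (5 * (n : ℚ) - 2) / (4 * (n : ℚ) - 1)) *
        ((4 * n - 1).choose (2 * n - 1) : ℚ) :=
  abs_cube_double_sum_general n
end
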